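/- Under the stated setup, if |λ₁| > |λ₂| then lim_{h→∞} CD⁺(h)/λ₁ʰ = α·D₄; equivalently, the cross-codifference CD(X₁(t),X₂(t+h)) is asymptotically α·D₄·λ₁ʰ as h → ∞. -/

import Mathlib

open MeasureTheory Filter Topology

/-- The signed power `x^⟨p⟩ = |x|^p · sign x`. -/
noncomputable def spow (x p : ℝ) : ℝ := |x| ^ p * Real.sign x

/-- The unit sphere `S₂ ⊆ ℝ²`. -/
abbrev Sphere2 : Type := {s : ℝ × ℝ // s.1 ^ 2 + s.2 ^ 2 = 1}

noncomputable def A3 (a1 a2 a3 a4 l1 l2 : ℝ) (j : ℕ) (s : Sphere2) : ℝ :=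
  (-(l1 ^ j * a3 * s.1.1) + l2 * l1 ^ j * s.1.2 - l1 ^ j * a4 * s.1.2) / (l2 - l1)

noncomputable def B3 (a1 a2 a3 a4 l1 l2 : ℝ) (j : ℕ) (s : Sphere2) : ℝ :=
  (l2 ^ j * a3 * s.1.1 - l1 * l2 ^ j * s.1.2 + l2 ^ j * a4 * s.1.2) / (l2 - l1)

noncomputable def C3 (a1 a2 a3 a4 l1 l2 : ℝ) (j : ℕ) (s : Sphere2) : ℝ :=
  (l1 ^ j * (l2 * s.1.1 - a1 * s.1.1 - a2 * s.1.2)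
    + l2 ^ j * (-(l1 * s.1.1) + a1 * s.1.1 + a2 * s.1.2)) / (l2 - l1)

/-- The cross-codifference `CD(X₁(t), X₂(t+h))` of the bidimensional α-stable AR(1) model. -/
noncomputable def CDpos (Γ : Measure Sphere2) (α a1 a2 a3 a4 l1 l2 : ℝ) (h : ℕ) : ℝ :=
  ∑' j : ℕ, ∫ s,
    (|l1 ^ h * A3 a1 a2 a3 a4 l1 l2 j s + l2 ^ h * B3 a1 a2 a3 a4 l1 l2 j s| ^ α
      + |C3 a1 a2 a3 a4 l1 l2 j s| ^ α
      - |C3 a1 a2 a3 a4 l1 l2 j s - (l1 ^ h * A3 a1 a2 a3 a4 l1 l2 j s + l2 ^ h * B3 a1 a2 a3 a4 l1 l2 j s)| ^ α) ∂Γ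

/-- The cross-covariation `CV(X₁(t), X₂(t+h))` of the bidimensional α-stable AR(1) model. -/
noncomputable def CVpos (Γ : Measure Sphere2) (α a1 a2 a3 a4 l1 l2 : ℝ) (h : ℕ) : ℝ :=
  ∑' j : ℕ, ∫ s,
    C3 a1 a2 a3 a4 l1 l2 j s * spow (l1 ^ h * A3 a1 a2 a3 a4 l1 l2 j s + l2 ^ h * B3 a1 a2 a3 a4 l1 l2 j s) (α - 1) ∂Γ

noncomputable def D4 (Γ : Measure Sphere2) (α a1 a2 a3 a4 l1 l2 : ℝ) : ℝ :=
  ∑' j : ℕ, ∫ s, A3 a1 a2 a3 a4 l1 l2 j s * spow (C3 a1 a2 a3 a4 l1 l2 j s) (α - 1) ∂Γ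

noncomputable def D5 (Γ : Measure Sphere2) (α a1 a2 a3 a4 l1 l2 : ℝ) : ℝ :=
  ∑' j : ℕ, ∫ s, B3 a1 a2 a3 a4 l1 l2 j s * spow (C3 a1 a2 a3 a4 l1 l2 j s) (α - 1) ∂Γ

noncomputable def D7 (Γ : Measure Sphere2) (α a1 a2 a3 a4 l1 l2 : ℝ) : ℝ :=
  ∑' j : ℕ, ∫ s, C3 a1 a2 a3 a4 l1 l2 j s * spow (A3 a1 a2 a3 a4 l1 l2 j s) (α - 1) ∂Γ

noncomputable def D8 (Γ : Measure Sphere2) (α a1 a2 a3 a4 l1 l2 : ℝ) : ℝ :=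
  ∑' j : ℕ, ∫ s, C3 a1 a2 a3 a4 l1 l2 j s * spow (B3 a1 a2 a3 a4 l1 l2 j s) (α - 1) ∂Γ

section AuxLemmas

open Asymptotics

lemma abs_spow_le (t q : ℝ) : |spow t q| ≤ |t| ^ q := by
  rw [spow, abs_mul, abs_of_nonneg (Real.rpow_nonneg (abs_nonneg t) q)]
  rcases lt_trichotomy t 0 with h | h | h
  · simp [Real.sign_of_neg h]
  · simp only [h, Real.sign_zero, abs_zero, mul_zero]
    positivity
  · simp [Real.sign_of_pos h]

lemma spow_eq_abs_rpow_mul {p : ℝ} (y : ℝ) :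
    |y| ^ (p - 2) * y = spow y (p - 1) := by
  rcases lt_trichotomy y 0 with h | h | h
  · rw [spow, Real.sign_of_neg h, abs_of_neg h,
      show p - 1 = p - 2 + 1 by ring,
      Real.rpow_add (by linarith : (0:ℝ) < -y), Real.rpow_one]
    ring
  · simp [h, spow]
  · rw [spow, Real.sign_of_pos h, abs_of_pos h,
      show p - 1 = p - 2 + 1 by ring, Real.rpow_add h, Real.rpow_one]
    ring

lemma hasDerivAt_abs_rpow_spow {p : ℝ} (hp : 1 < p) (y : ℝ) :
    HasDerivAt (fun x : ℝ => |x| ^ p) (p * spow y (p - 1)) y := by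
  have h := hasDerivAt_abs_rpow y hp
  rwa [mul_assoc, spow_eq_abs_rpow_mul] at h

lemma abs_rpow_sub_abs_rpow_le {p : ℝ} (hp : 1 < p) (y x : ℝ) :
    abs (|y| ^ p - |y - x| ^ p) ≤ p * (|x| + |y|) ^ (p - 1) * |x| := by
  have hconv : Convex ℝ (Set.Icc (-(|x| + |y|)) (|x| + |y|)) := convex_Icc _ _
  have hmem1 : y ∈ Set.Icc (-(|x| + |y|)) (|x| + |y|) := by
    constructor <;> nlinarith [neg_abs_le y, le_abs_self y, abs_nonneg x]
  have hmem2 : y - x ∈ Set.Icc (-(|x| + |y|)) (|x| + |y|) := by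
    constructor <;>
      nlinarith [neg_abs_le y, le_abs_self y, neg_abs_le x, le_abs_self x]
  have hderiv : ∀ t ∈ Set.Icc (-(|x| + |y|)) (|x| + |y|),
      HasDerivWithinAt (fun u : ℝ => |u| ^ p) (p * spow t (p - 1))
        (Set.Icc (-(|x| + |y|)) (|x| + |y|)) t :=
    fun t _ => (hasDerivAt_abs_rpow_spow hp t).hasDerivWithinAt
  have hbound : ∀ t ∈ Set.Icc (-(|x| + |y|)) (|x| + |y|),
      ‖p * spow t (p - 1)‖ ≤ p * (|x| + |y|) ^ (p - 1) := by
    intro t ht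
    rw [Real.norm_eq_abs, abs_mul, abs_of_pos (by linarith : (0:ℝ) < p)]
    refine mul_le_mul_of_nonneg_left ?_ (by linarith)
    refine (abs_spow_le t (p - 1)).trans ?_
    exact Real.rpow_le_rpow (abs_nonneg t) (abs_le.mpr ⟨ht.1, ht.2⟩) (by linarith)
  have := hconv.norm_image_sub_le_of_norm_hasDerivWithin_le hderiv hbound hmem2 hmem1
  simpa [Real.norm_eq_abs] using this

lemma F_bound {p : ℝ} (hp : 1 < p) (y x : ℝ) :
    abs (|x| ^ p + |y| ^ p - |y - x| ^ p) ≤ |x| ^ p + p * (|x| + |y|) ^ (p - 1) * |x| := by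
  have h1 := abs_rpow_sub_abs_rpow_le hp y x
  have h2 : (0:ℝ) ≤ |x| ^ p := Real.rpow_nonneg (abs_nonneg x) p
  calc abs (|x| ^ p + |y| ^ p - |y - x| ^ p)
      = abs (|x| ^ p + (|y| ^ p - |y - x| ^ p)) := by ring_nf
    _ ≤ abs (|x| ^ p) + abs (|y| ^ p - |y - x| ^ p) := abs_add_le _ _
    _ ≤ |x| ^ p + p * (|x| + |y|) ^ (p - 1) * |x| := by
        rw [abs_of_nonneg h2]; exact add_le_add le_rfl h1

lemma key_tendsto {p : ℝ} (hp : 1 < p) {l1 l2 : ℝ}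
    (h1 : |l1| < 1) (hgt : |l2| < |l1|) (A B C : ℝ) :
    Tendsto (fun h : ℕ =>
      (|l1 ^ h * A + l2 ^ h * B| ^ p + |C| ^ p
        - |C - (l1 ^ h * A + l2 ^ h * B)| ^ p) / l1 ^ h)
      atTop (𝓝 (p * (A * spow C (p - 1)))) := by
  have hl1ne : l1 ≠ 0 := by
    intro hc
    rw [hc, abs_zero] at hgt
    exact absurd hgt (not_lt.mpr (abs_nonneg l2))
  set d : ℝ := p * spow C (p - 1) with hd
  set F : ℝ → ℝ := fun t => |t| ^ p + |C| ^ p - |C - t| ^ p with hF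
  set x : ℕ → ℝ := fun h => l1 ^ h * A + l2 ^ h * B with hx
  have hF0 : F 0 = 0 := by
    simp [hF, Real.zero_rpow (by linarith : p ≠ 0)]
  have hFd : HasDerivAt F d 0 := by
    have hd1 : HasDerivAt (fun t : ℝ => |t| ^ p) (p * spow (0:ℝ) (p - 1)) 0 :=
      hasDerivAt_abs_rpow_spow hp 0
    have houter : HasDerivAt (fun u : ℝ => |u| ^ p) (p * spow C (p - 1))
        ((fun t : ℝ => C - t) 0) := by
      simpa using hasDerivAt_abs_rpow_spow hp C
    have hinner : HasDerivAt (fun t : ℝ => C - t) (-1) 0 := (hasDerivAt_id 0).const_sub C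
    have hd2 : HasDerivAt (fun t : ℝ => |C - t| ^ p) (p * spow C (p - 1) * (-1)) 0 := by
      have hcomp := houter.comp 0 hinner
      exact hcomp
    have hsum := (hd1.add_const (|C| ^ p)).sub hd2
    have heq : p * spow (0:ℝ) (p - 1) - p * spow C (p - 1) * (-1) = d := by
      simp [spow, hd]
    rw [heq] at hsum
    exact hsum
  have hx0 : Tendsto x atTop (𝓝 0) := by
    have t1 := (tendsto_pow_atTop_nhds_zero_of_abs_lt_one h1).mul_const A
    have t2 := (tendsto_pow_atTop_nhds_zero_of_abs_lt_one (hgt.trans h1)).mul_const B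
    simpa [hx] using t1.add t2
  have hlo : (fun t : ℝ => F t - F 0 - (t - 0) • d) =o[𝓝 0] fun t => t - 0 :=
    hasDerivAt_iff_isLittleO.mp hFd
  have hlo2 : (fun h : ℕ => F (x h) - d * x h) =o[atTop] x := by
    have := hlo.comp_tendsto hx0
    simpa [Function.comp_def, hF0, smul_eq_mul, mul_comm] using this
  have hxO : x =O[atTop] fun h : ℕ => l1 ^ h := by
    refine isBigO_of_le' (c := |A| + |B|) atTop fun h => ?_
    rw [Real.norm_eq_abs, Real.norm_eq_abs, abs_pow]
    calc |l1 ^ h * A + l2 ^ h * B| ≤ |l1 ^ h * A| + |l2 ^ h * B| := abs_add_le _ _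
      _ = |l1| ^ h * |A| + |l2| ^ h * |B| := by rw [abs_mul, abs_mul, abs_pow, abs_pow]
      _ ≤ |l1| ^ h * |A| + |l1| ^ h * |B| := by
          have : |l2| ^ h ≤ |l1| ^ h := pow_le_pow_left₀ (abs_nonneg _) hgt.le h
          have hA0 : (0:ℝ) ≤ |A| := abs_nonneg _
          have hB0 : (0:ℝ) ≤ |B| := abs_nonneg _
          nlinarith [pow_nonneg (abs_nonneg l1) h, pow_nonneg (abs_nonneg l2) h]
      _ = (|A| + |B|) * |l1| ^ h := by ring
  have htend0 : Tendsto (fun h : ℕ => (F (x h) - d * x h) / l1 ^ h) atTop (𝓝 0) :=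
    (hlo2.trans_isBigO hxO).tendsto_div_nhds_zero
  have hlt : |l2 / l1| < 1 := by
    rw [abs_div]
    exact (div_lt_one (lt_of_le_of_lt (abs_nonneg l2) hgt)).mpr hgt
  have hratio : Tendsto (fun h : ℕ => x h / l1 ^ h) atTop (𝓝 A) := by
    have hbase' : Tendsto (fun h : ℕ => A + (l2 / l1) ^ h * B) atTop (𝓝 (A + 0 * B)) :=
      tendsto_const_nhds.add ((tendsto_pow_atTop_nhds_zero_of_abs_lt_one hlt).mul_const B)
    rw [show A + 0 * B = A from by ring] at hbase'
    refine Tendsto.congr (fun h => ?_) hbase'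
    have hne : (l1 : ℝ) ^ h ≠ 0 := pow_ne_zero _ hl1ne
    rw [hx]
    have e : (l2 / l1) ^ h * l1 ^ h = l2 ^ h := by rw [← mul_pow, div_mul_cancel₀ _ hl1ne]
    show A + (l2 / l1) ^ h * B = (l1 ^ h * A + l2 ^ h * B) / l1 ^ h
    rw [eq_div_iff hne, ← e]
    ring
  have hsum2 : Tendsto (fun h : ℕ => (F (x h) - d * x h) / l1 ^ h + x h / l1 ^ h * d)
      atTop (𝓝 (0 + A * d)) := htend0.add (hratio.mul_const d)
  have hfinal : Tendsto (fun h : ℕ => F (x h) / l1 ^ h) atTop (𝓝 (A * d)) := by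
    rw [← zero_add (A * d)]
    refine Tendsto.congr (fun h => ?_) hsum2
    have hne : (l1 : ℝ) ^ h ≠ 0 := pow_ne_zero _ hl1ne
    field_simp
    ring
  have hval : p * (A * spow C (p - 1)) = A * d := by rw [hd]; ring
  rw [hval]
  exact hfinal

end AuxLemmas

set_option maxHeartbeats 2000000 in
theorem CD_pos_asymptotic_case_I
    (Γ : Measure Sphere2) [IsFiniteMeasure Γ]
    (α a1 a2 a3 a4 l1 l2 : ℝ) (hα1 : 1 < α) (hα2 : α < 2)
    (hl1 : l1 ^ 2 - (a1 + a4) * l1 + (a1 * a4 - a2 * a3) = 0)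
    (hl2 : l2 ^ 2 - (a1 + a4) * l2 + (a1 * a4 - a2 * a3) = 0)
    (hne : l1 ≠ l2) (habs1 : |l1| < 1) (habs2 : |l2| < 1)
    (hgt : |l2| < |l1|) :
    Tendsto (fun h : ℕ => CDpos Γ α a1 a2 a3 a4 l1 l2 h / l1 ^ h) atTop
      (𝓝 (α * D4 Γ α a1 a2 a3 a4 l1 l2)) := by
  haveI : OpensMeasurableSpace Sphere2 :=
    Subtype.opensMeasurableSpace {s : ℝ × ℝ | s.1 ^ 2 + s.2 ^ 2 = 1}
  have hαpos : (0:ℝ) < α := by linarith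
  have hl1ne : l1 ≠ 0 := by
    intro hc
    rw [hc, abs_zero] at hgt
    exact absurd hgt (not_lt.mpr (abs_nonneg l2))
  have hl1pos : 0 < |l1| := abs_pos.mpr hl1ne
  have hden : 0 < |l2 - l1| := abs_pos.mpr (sub_ne_zero.mpr (Ne.symm hne))
  set A := A3 a1 a2 a3 a4 l1 l2 with hAdef
  set B := B3 a1 a2 a3 a4 l1 l2 with hBdef
  set C := C3 a1 a2 a3 a4 l1 l2 with hCdef
  set M : ℝ := (|a1| + |a2| + |a3| + |a4| + |l1| + |l2|) / |l2 - l1| + 1 with hMdef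
  have hM0 : 0 < M := by rw [hMdef]; positivity
  have hMden : |a1| + |a2| + |a3| + |a4| + |l1| + |l2| + |l2 - l1| = M * |l2 - l1| := by
    rw [hMdef]
    field_simp
  have hcoord : ∀ s : Sphere2, |s.1.1| ≤ 1 ∧ |s.1.2| ≤ 1 := by
    intro s
    have hs := s.2
    constructor <;> rw [abs_le] <;> constructor <;>
      nlinarith [sq_nonneg s.1.1, sq_nonneg s.1.2, sq_nonneg (s.1.1 + 1), sq_nonneg (s.1.1 - 1),
        sq_nonneg (s.1.2 + 1), sq_nonneg (s.1.2 - 1)]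
  have habA : ∀ (j : ℕ) (s : Sphere2), |A j s| ≤ M * |l1| ^ j := by
    intro j s
    obtain ⟨hs1, hs2⟩ := hcoord s
    have hpj : (0:ℝ) ≤ |l1| ^ j := pow_nonneg (abs_nonneg _) j
    have key : |a3| + |l2| + |a4| ≤ M * |l2 - l1| := by
      linarith [hMden, abs_nonneg a1, abs_nonneg a2, abs_nonneg l1, hden.le]
    simp only [hAdef, A3]
    rw [abs_div, div_le_iff₀ hden]
    calc |(-(l1 ^ j * a3 * s.1.1) + l2 * l1 ^ j * s.1.2 - l1 ^ j * a4 * s.1.2)|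
        = |(-(l1 ^ j * a3 * s.1.1)) + l2 * l1 ^ j * s.1.2 + (-(l1 ^ j * a4 * s.1.2))| := by
          rw [sub_eq_add_neg]
      _ ≤ |(-(l1 ^ j * a3 * s.1.1))| + |l2 * l1 ^ j * s.1.2| + |(-(l1 ^ j * a4 * s.1.2))| :=
          abs_add_three _ _ _
      _ = |l1| ^ j * |a3| * |s.1.1| + |l2| * |l1| ^ j * |s.1.2| + |l1| ^ j * |a4| * |s.1.2| := by
          simp only [abs_neg, abs_mul, abs_pow]
      _ ≤ |l1| ^ j * |a3| * 1 + |l2| * |l1| ^ j * 1 + |l1| ^ j * |a4| * 1 := by gcongr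
      _ = |l1| ^ j * (|a3| + |l2| + |a4|) := by ring
      _ ≤ |l1| ^ j * (M * |l2 - l1|) := mul_le_mul_of_nonneg_left key hpj
      _ = M * |l1| ^ j * |l2 - l1| := by ring
  have habB : ∀ (j : ℕ) (s : Sphere2), |B j s| ≤ M * |l1| ^ j := by
    intro j s
    obtain ⟨hs1, hs2⟩ := hcoord s
    have hpj : (0:ℝ) ≤ |l1| ^ j := pow_nonneg (abs_nonneg _) j
    have hpow : |l2| ^ j ≤ |l1| ^ j := pow_le_pow_left₀ (abs_nonneg _) hgt.le j
    have key : |a3| + |l1| + |a4| ≤ M * |l2 - l1| := by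
      linarith [hMden, abs_nonneg a1, abs_nonneg a2, abs_nonneg l2, hden.le]
    simp only [hBdef, B3]
    rw [abs_div, div_le_iff₀ hden]
    calc |(l2 ^ j * a3 * s.1.1 - l1 * l2 ^ j * s.1.2 + l2 ^ j * a4 * s.1.2)|
        = |l2 ^ j * a3 * s.1.1 + (-(l1 * l2 ^ j * s.1.2)) + l2 ^ j * a4 * s.1.2| := by
          rw [sub_eq_add_neg]
      _ ≤ |l2 ^ j * a3 * s.1.1| + |(-(l1 * l2 ^ j * s.1.2))| + |l2 ^ j * a4 * s.1.2| :=
          abs_add_three _ _ _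
      _ = |l2| ^ j * |a3| * |s.1.1| + |l1| * |l2| ^ j * |s.1.2| + |l2| ^ j * |a4| * |s.1.2| := by
          simp only [abs_neg, abs_mul, abs_pow]
      _ ≤ |l2| ^ j * |a3| * 1 + |l1| * |l2| ^ j * 1 + |l2| ^ j * |a4| * 1 := by gcongr
      _ = |l2| ^ j * (|a3| + |l1| + |a4|) := by ring
      _ ≤ |l1| ^ j * (|a3| + |l1| + |a4|) :=
          mul_le_mul_of_nonneg_right hpow (by positivity)
      _ ≤ |l1| ^ j * (M * |l2 - l1|) := mul_le_mul_of_nonneg_left key hpj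
      _ = M * |l1| ^ j * |l2 - l1| := by ring
  have habC : ∀ (j : ℕ) (s : Sphere2), |C j s| ≤ 2 * M * |l1| ^ j := by
    intro j s
    obtain ⟨hs1, hs2⟩ := hcoord s
    have hpj : (0:ℝ) ≤ |l1| ^ j := pow_nonneg (abs_nonneg _) j
    have hpow : |l2| ^ j ≤ |l1| ^ j := pow_le_pow_left₀ (abs_nonneg _) hgt.le j
    have keyu : |l2 * s.1.1 - a1 * s.1.1 - a2 * s.1.2| ≤ M * |l2 - l1| := by
      have h3 := abs_add_three (l2 * s.1.1) (-(a1 * s.1.1)) (-(a2 * s.1.2))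
      rw [abs_neg, abs_neg, abs_mul, abs_mul, abs_mul] at h3
      have e : l2 * s.1.1 - a1 * s.1.1 - a2 * s.1.2
          = l2 * s.1.1 + -(a1 * s.1.1) + -(a2 * s.1.2) := by ring
      rw [e]
      refine h3.trans ?_
      nlinarith [abs_nonneg l2, abs_nonneg a1, abs_nonneg a2, abs_nonneg a3, abs_nonneg a4,
        abs_nonneg l1, hMden, hden.le, abs_nonneg s.1.1, abs_nonneg s.1.2,
        mul_nonneg (abs_nonneg l2) (abs_nonneg s.1.1)]
    have keyv : |(-(l1 * s.1.1) + a1 * s.1.1 + a2 * s.1.2)| ≤ M * |l2 - l1| := by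
      have h3 := abs_add_three (-(l1 * s.1.1)) (a1 * s.1.1) (a2 * s.1.2)
      rw [abs_neg, abs_mul, abs_mul, abs_mul] at h3
      refine h3.trans ?_
      nlinarith [abs_nonneg l2, abs_nonneg a1, abs_nonneg a2, abs_nonneg a3, abs_nonneg a4,
        abs_nonneg l1, hMden, hden.le, abs_nonneg s.1.1, abs_nonneg s.1.2,
        mul_nonneg (abs_nonneg l1) (abs_nonneg s.1.1)]
    simp only [hCdef, C3]
    rw [abs_div, div_le_iff₀ hden]
    calc |l1 ^ j * (l2 * s.1.1 - a1 * s.1.1 - a2 * s.1.2)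
          + l2 ^ j * (-(l1 * s.1.1) + a1 * s.1.1 + a2 * s.1.2)|
        ≤ |l1 ^ j * (l2 * s.1.1 - a1 * s.1.1 - a2 * s.1.2)|
          + |l2 ^ j * (-(l1 * s.1.1) + a1 * s.1.1 + a2 * s.1.2)| := abs_add_le _ _
      _ = |l1| ^ j * |l2 * s.1.1 - a1 * s.1.1 - a2 * s.1.2|
          + |l2| ^ j * |(-(l1 * s.1.1) + a1 * s.1.1 + a2 * s.1.2)| := by
          rw [abs_mul, abs_mul, abs_pow, abs_pow]
      _ ≤ |l1| ^ j * (M * |l2 - l1|) + |l1| ^ j * (M * |l2 - l1|) := by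
          refine add_le_add (mul_le_mul_of_nonneg_left keyu hpj) ?_
          calc |l2| ^ j * |(-(l1 * s.1.1) + a1 * s.1.1 + a2 * s.1.2)|
              ≤ |l1| ^ j * |(-(l1 * s.1.1) + a1 * s.1.1 + a2 * s.1.2)| :=
                mul_le_mul_of_nonneg_right hpow (abs_nonneg _)
            _ ≤ |l1| ^ j * (M * |l2 - l1|) := mul_le_mul_of_nonneg_left keyv hpj
      _ = 2 * M * |l1| ^ j * |l2 - l1| := by ring
  set K : ℕ → ℝ := fun j => (2 * M * |l1| ^ j) ^ α
      + α * (4 * M * |l1| ^ j) ^ (α - 1) * (2 * M * |l1| ^ j) with hKdef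
  have hptw : ∀ (h j : ℕ) (s : Sphere2),
      |(|l1 ^ h * A j s + l2 ^ h * B j s| ^ α + |C j s| ^ α
        - |C j s - (l1 ^ h * A j s + l2 ^ h * B j s)| ^ α) / l1 ^ h| ≤ K j := by
    intro h j s
    have hpj : (0:ℝ) ≤ |l1| ^ j := pow_nonneg (abs_nonneg _) j
    have hph : (0:ℝ) < |l1| ^ h := pow_pos hl1pos h
    have hrh1 : |l1| ^ h ≤ 1 := pow_le_one₀ (abs_nonneg _) habs1.le
    set xh : ℝ := l1 ^ h * A j s + l2 ^ h * B j s with hxh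
    have hxa : |xh| ≤ 2 * M * |l1| ^ j * |l1| ^ h := by
      calc |xh| ≤ |l1 ^ h * A j s| + |l2 ^ h * B j s| := abs_add_le _ _
        _ = |l1| ^ h * |A j s| + |l2| ^ h * |B j s| := by
            rw [abs_mul, abs_mul, abs_pow, abs_pow]
        _ ≤ |l1| ^ h * (M * |l1| ^ j) + |l1| ^ h * (M * |l1| ^ j) := by
            refine add_le_add (mul_le_mul_of_nonneg_left (habA j s) hph.le) ?_
            calc |l2| ^ h * |B j s| ≤ |l1| ^ h * |B j s| :=
                  mul_le_mul_of_nonneg_right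
                    (pow_le_pow_left₀ (abs_nonneg _) hgt.le h) (abs_nonneg _)
              _ ≤ |l1| ^ h * (M * |l1| ^ j) := mul_le_mul_of_nonneg_left (habB j s) hph.le
        _ = 2 * M * |l1| ^ j * |l1| ^ h := by ring
    have hxb : |xh| ≤ 2 * M * |l1| ^ j := by
      nlinarith [hxa, hM0, hpj, hph, hrh1, mul_nonneg hM0.le hpj]
    have hFb := F_bound hα1 (C j s) xh
    rw [abs_div, abs_pow, div_le_iff₀ hph]
    have b1 : |xh| ^ α ≤ (2 * M * |l1| ^ j) ^ α * |l1| ^ h := by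
      calc |xh| ^ α ≤ (2 * M * |l1| ^ j * |l1| ^ h) ^ α :=
            Real.rpow_le_rpow (abs_nonneg _) hxa (by linarith)
        _ = (2 * M * |l1| ^ j) ^ α * (|l1| ^ h) ^ α :=
            Real.mul_rpow (by positivity) (by positivity)
        _ ≤ (2 * M * |l1| ^ j) ^ α * |l1| ^ h := by
            refine mul_le_mul_of_nonneg_left ?_ (Real.rpow_nonneg (by positivity) _)
            calc (|l1| ^ h) ^ α ≤ (|l1| ^ h) ^ (1:ℝ) :=
                  Real.rpow_le_rpow_of_exponent_ge hph hrh1 (by linarith)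
              _ = |l1| ^ h := Real.rpow_one _
    have b2 : α * (|xh| + |C j s|) ^ (α - 1) * |xh|
        ≤ α * (4 * M * |l1| ^ j) ^ (α - 1) * (2 * M * |l1| ^ j * |l1| ^ h) := by
      have hxc : |xh| + |C j s| ≤ 4 * M * |l1| ^ j := by
        have := habC j s
        linarith [hxb]
      refine mul_le_mul ?_ hxa (abs_nonneg _)
        (mul_nonneg (by linarith) (Real.rpow_nonneg (by positivity) _))
      exact mul_le_mul_of_nonneg_left
        (Real.rpow_le_rpow (by positivity) hxc (by linarith)) (by linarith)
    calc abs (|xh| ^ α + |C j s| ^ α - |C j s - xh| ^ α)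
        ≤ |xh| ^ α + α * (|xh| + |C j s|) ^ (α - 1) * |xh| := hFb
      _ ≤ (2 * M * |l1| ^ j) ^ α * |l1| ^ h
          + α * (4 * M * |l1| ^ j) ^ (α - 1) * (2 * M * |l1| ^ j * |l1| ^ h) :=
          add_le_add b1 b2
      _ = K j * |l1| ^ h := by simp only [hKdef]; ring
  have hcA : ∀ j, Continuous fun s : Sphere2 => A j s := by
    intro j; simp only [hAdef, A3]; fun_prop
  have hcB : ∀ j, Continuous fun s : Sphere2 => B j s := by
    intro j; simp only [hBdef, B3]; fun_prop
  have hcC : ∀ j, Continuous fun s : Sphere2 => C j s := by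
    intro j; simp only [hCdef, C3]; fun_prop
  have hcG : ∀ (h j : ℕ), Continuous fun s : Sphere2 =>
      (|l1 ^ h * A j s + l2 ^ h * B j s| ^ α + |C j s| ^ α
        - |C j s - (l1 ^ h * A j s + l2 ^ h * B j s)| ^ α) / l1 ^ h := by
    intro h j
    have hx : Continuous fun s : Sphere2 => l1 ^ h * A j s + l2 ^ h * B j s :=
      (continuous_const.mul (hcA j)).add (continuous_const.mul (hcB j))
    have t1 : Continuous fun s : Sphere2 => |l1 ^ h * A j s + l2 ^ h * B j s| ^ α :=
      hx.abs.rpow_const fun s => Or.inr (by linarith)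
    have t2 : Continuous fun s : Sphere2 => |C j s| ^ α :=
      (hcC j).abs.rpow_const fun s => Or.inr (by linarith)
    have t3 : Continuous fun s : Sphere2 =>
        |C j s - (l1 ^ h * A j s + l2 ^ h * B j s)| ^ α :=
      ((hcC j).sub hx).abs.rpow_const fun s => Or.inr (by linarith)
    exact ((t1.add t2).sub t3).div_const _
  have hab : ∀ j : ℕ, Tendsto (fun h : ℕ =>
      (∫ s, (|l1 ^ h * A j s + l2 ^ h * B j s| ^ α + |C j s| ^ α
        - |C j s - (l1 ^ h * A j s + l2 ^ h * B j s)| ^ α) ∂Γ) / l1 ^ h) atTop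
      (𝓝 (α * ∫ s, A j s * spow (C j s) (α - 1) ∂Γ)) := by
    intro j
    have hlim := MeasureTheory.tendsto_integral_of_dominated_convergence
      (F := fun (h : ℕ) (s : Sphere2) =>
        (|l1 ^ h * A j s + l2 ^ h * B j s| ^ α + |C j s| ^ α
          - |C j s - (l1 ^ h * A j s + l2 ^ h * B j s)| ^ α) / l1 ^ h)
      (f := fun s : Sphere2 => α * (A j s * spow (C j s) (α - 1)))
      (bound := fun _ : Sphere2 => K j) (μ := Γ)
      (fun h => (hcG h j).aestronglyMeasurable)
      (integrable_const _)
      (fun h => Eventually.of_forall fun s => by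
        rw [Real.norm_eq_abs]; exact hptw h j s)
      (Eventually.of_forall fun s => key_tendsto hα1 habs1 hgt (A j s) (B j s) (C j s))
    rw [show α * ∫ s, A j s * spow (C j s) (α - 1) ∂Γ
        = ∫ s, α * (A j s * spow (C j s) (α - 1)) ∂Γ from (integral_const_mul α _).symm]
    refine Tendsto.congr (fun h => ?_) hlim
    exact integral_div _ _
  have hrpow : |l1| ^ α < 1 := Real.rpow_lt_one (abs_nonneg _) habs1 hαpos
  have hKeq : ∀ j : ℕ,
      K j = ((2 * M) ^ α + α * (4 * M) ^ (α - 1) * (2 * M)) * (|l1| ^ α) ^ j := by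
    intro j
    have hj0 : (0:ℝ) < |l1| ^ j := pow_pos hl1pos j
    have h1 : (2 * M * |l1| ^ j) ^ α = (2 * M) ^ α * (|l1| ^ j) ^ α :=
      Real.mul_rpow (by positivity) (by positivity)
    have h2 : (4 * M * |l1| ^ j) ^ (α - 1) = (4 * M) ^ (α - 1) * (|l1| ^ j) ^ (α - 1) :=
      Real.mul_rpow (by positivity) (by positivity)
    have h3 : (|l1| ^ j) ^ (α - 1) * |l1| ^ j = (|l1| ^ j) ^ α := by
      calc (|l1| ^ j) ^ (α - 1) * |l1| ^ j
          = (|l1| ^ j) ^ (α - 1) * (|l1| ^ j) ^ (1:ℝ) := by rw [Real.rpow_one]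
        _ = (|l1| ^ j) ^ (α - 1 + 1) := (Real.rpow_add hj0 _ _).symm
        _ = (|l1| ^ j) ^ α := by norm_num
    have h4 : ((|l1| ^ j : ℝ)) ^ α = (|l1| ^ α) ^ j := by
      rw [← Real.rpow_natCast (|l1|) j, ← Real.rpow_natCast (|l1| ^ α) j,
        ← Real.rpow_mul (abs_nonneg l1), ← Real.rpow_mul (abs_nonneg l1)]
      ring_nf
    simp only [hKdef]
    rw [h1, h2]
    calc (2 * M) ^ α * (|l1| ^ j) ^ α
          + α * ((4 * M) ^ (α - 1) * (|l1| ^ j) ^ (α - 1)) * (2 * M * |l1| ^ j)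
        = (2 * M) ^ α * (|l1| ^ j) ^ α
          + α * (4 * M) ^ (α - 1) * (2 * M) * ((|l1| ^ j) ^ (α - 1) * |l1| ^ j) := by ring
      _ = (2 * M) ^ α * (|l1| ^ j) ^ α
          + α * (4 * M) ^ (α - 1) * (2 * M) * (|l1| ^ j) ^ α := by rw [h3]
      _ = ((2 * M) ^ α + α * (4 * M) ^ (α - 1) * (2 * M)) * (|l1| ^ α) ^ j := by
          rw [h4]; ring
  have hgeo : Summable (fun j : ℕ =>
      (((2 * M) ^ α + α * (4 * M) ^ (α - 1) * (2 * M)) * (|l1| ^ α) ^ j)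
        * (Γ Set.univ).toReal) :=
    ((summable_geometric_of_lt_one (Real.rpow_nonneg (abs_nonneg _) _) hrpow).mul_left
      _).mul_right _
  have hsummable : Summable (fun j : ℕ => K j * (Γ Set.univ).toReal) :=
    hgeo.congr fun j => by rw [hKeq j]
  have houter : ∀ᶠ (h : ℕ) in atTop, ∀ j : ℕ,
      ‖(∫ s, (|l1 ^ h * A j s + l2 ^ h * B j s| ^ α + |C j s| ^ α
        - |C j s - (l1 ^ h * A j s + l2 ^ h * B j s)| ^ α) ∂Γ) / l1 ^ h‖
        ≤ K j * (Γ Set.univ).toReal := by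
    refine Eventually.of_forall fun h j => ?_
    rw [show (∫ s, (|l1 ^ h * A j s + l2 ^ h * B j s| ^ α + |C j s| ^ α
        - |C j s - (l1 ^ h * A j s + l2 ^ h * B j s)| ^ α) ∂Γ) / l1 ^ h
      = ∫ s, (|l1 ^ h * A j s + l2 ^ h * B j s| ^ α + |C j s| ^ α
        - |C j s - (l1 ^ h * A j s + l2 ^ h * B j s)| ^ α) / l1 ^ h ∂Γ
      from (integral_div _ _).symm]
    refine norm_integral_le_of_norm_le_const ?_
    exact Eventually.of_forall fun s => by rw [Real.norm_eq_abs]; exact hptw h j s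
  have main := tendsto_tsum_of_dominated_convergence
    (f := fun (h : ℕ) (j : ℕ) =>
      (∫ s, (|l1 ^ h * A j s + l2 ^ h * B j s| ^ α + |C j s| ^ α
        - |C j s - (l1 ^ h * A j s + l2 ^ h * B j s)| ^ α) ∂Γ) / l1 ^ h)
    (g := fun j : ℕ => α * ∫ s, A j s * spow (C j s) (α - 1) ∂Γ)
    (bound := fun j : ℕ => K j * (Γ Set.univ).toReal)
    hsummable hab houter
  have hval : (∑' j : ℕ, (α * ∫ s, A j s * spow (C j s) (α - 1) ∂Γ))
      = α * D4 Γ α a1 a2 a3 a4 l1 l2 := by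
    rw [tsum_mul_left]
    simp only [hAdef, hCdef, D4]
  rw [← hval]
  refine Tendsto.congr (fun h => ?_) main
  simp only [CDpos, hAdef, hBdef, hCdef]
  exact tsum_div_const
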